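/- arXiv:2107.04185 — 2 statements merged into one kernel-verified Lean document; each statement's English description precedes it below -/
import Mathlib

section
/- The zero action profile 0 ∈ ℝ₊ⁿ is Pareto efficient if and only if the spectral radius of the benefits matrix B(0) is at most 1. -/
open Matrix

/-- The spectral radius of a real square matrix: the largest modulus of a
(complex) eigenvalue, i.e. of an element of the spectrum of the matrix viewed
over `ℂ`. -/
noncomputable def specRad {n : ℕ} (M : Matrix (Fin n) (Fin n) ℝ) : ℝ :=
  sSup ((fun z : ℂ => ‖z‖) '' spectrum ℂ (M.map (Complex.ofReal : ℝ → ℂ)))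

/-- The nonnegative orthant `ℝ₊ⁿ`, the domain of action profiles. -/
def nonnegOrthant (n : ℕ) : Set (Fin n → ℝ) := {x | ∀ i, 0 ≤ x i}

/-- The Jacobian matrix of the utility profile `u` at `a`:
`Jmat u a i j = ∂u_i/∂a_j (a)`. -/
noncomputable def Jmat {n : ℕ} (u : Fin n → (Fin n → ℝ) → ℝ) (a : Fin n → ℝ) :
    Matrix (Fin n) (Fin n) ℝ :=
  Matrix.of fun i j => fderiv ℝ (u i) a (Pi.single j 1)

/-- The benefits matrix `B(a)`: `B_ij = J_ij / (-J_ii)` off the diagonal and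
`B_ii = 0`. -/
noncomputable def Bmat {n : ℕ} (u : Fin n → (Fin n → ℝ) → ℝ) (a : Fin n → ℝ) :
    Matrix (Fin n) (Fin n) ℝ :=
  Matrix.of fun i j => if i = j then 0 else Jmat u a i j / (- Jmat u a i i)

/-- A nonnegative matrix is irreducible when every pair of indices is
connected by some power of the matrix. -/
def MatIrreducible {n : ℕ} (M : Matrix (Fin n) (Fin n) ℝ) : Prop :=
  ∀ i j, ∃ k : ℕ, 1 ≤ k ∧ 0 < (M ^ k) i j

/-- `a` can be Pareto improved upon within the nonnegative orthant. -/
def ParetoImprovable {n : ℕ} (u : Fin n → (Fin n → ℝ) → ℝ) (a : Fin n → ℝ) : Prop :=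
  ∃ a' : Fin n → ℝ, (∀ i, 0 ≤ a' i) ∧ (∀ i, u i a ≤ u i a') ∧ ∃ i, u i a < u i a'

/-!
At `0` the Jacobian and the benefits matrix are related by `(J x)_i = -J_ii ((B x)_i - x_i)`, so a
direction `x ≥ 0` raises every utility to first order exactly when `x < B x` coordinatewise.
Concavity makes this first-order condition necessary as well: a Pareto improvement `a` satisfies
`a ≤ B a` with one strict coordinate. Since `B` is nonnegative and irreducible, applying a suitable
sum of powers of `B` turns such a vector into a `y ≥ 0` with `y < B y` everywhere, and such a `y`
exists exactly when `r(B) > 1`: the moduli of an eigenvector for an eigenvalue of modulus `r(B)`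
give one, and conversely `ρ y ≤ B y` with `ρ > 1` forces `‖B ^ k‖ ≥ c ρ ^ k`, hence `r(B) ≥ ρ` by
Gelfand's formula.
-/

open Filter Topology

section BanachAlgebra

variable {A : Type*} [NormedRing A] [NormedAlgebra ℂ A] [CompleteSpace A]

theorem ofReal_le_spectralRadius_of_mul_pow_le_norm_pow {a : A} {c ρ : ℝ} (hc : 0 < c)
    (hρ : 0 ≤ ρ) (h : ∀ k : ℕ, c * ρ ^ k ≤ ‖a ^ k‖) :
    ENNReal.ofReal ρ ≤ spectralRadius ℂ a := by
  have hroot : Tendsto (fun k : ℕ => c ^ (1 / k : ℝ)) atTop (𝓝 1) := by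
    simpa [Function.comp_def] using (Real.continuousAt_const_rpow hc.ne').tendsto.comp
      tendsto_one_div_atTop_nhds_zero_nat
  have hlim : Tendsto (fun k : ℕ => c ^ (1 / k : ℝ) * ρ) atTop (𝓝 ρ) := by
    simpa using hroot.mul_const ρ
  refine le_of_tendsto_of_tendsto (ENNReal.tendsto_ofReal hlim)
    (spectrum.pow_norm_pow_one_div_tendsto_nhds_spectralRadius a) ?_
  filter_upwards [eventually_ne_atTop 0] with k hk
  refine ENNReal.ofReal_le_ofReal ?_
  calc c ^ (1 / k : ℝ) * ρ = (c * ρ ^ k) ^ (1 / k : ℝ) := by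
        rw [Real.mul_rpow hc.le (by positivity), one_div, Real.pow_rpow_inv_natCast hρ hk]
    _ ≤ ‖a ^ k‖ ^ (1 / k : ℝ) := Real.rpow_le_rpow (by positivity) (h k) (by positivity)

end BanachAlgebra

theorem exists_one_lt_smul_le_of_forall_lt {ι : Type*} [Finite ι] {x y : ι → ℝ}
    (h : ∀ i, x i < y i) : ∃ ρ : ℝ, 1 < ρ ∧ ρ • x ≤ y := by
  have hnear : ∀ᶠ ρ in 𝓝 (1 : ℝ), ∀ i, ρ * x i < y i := eventually_all.mpr fun i =>
    ((continuous_id.mul_const (x i)).tendsto 1).eventually (eventually_lt_nhds (by simpa using h i))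
  obtain ⟨ρ, hρ, hρ1⟩ :=
    ((hnear.filter_mono (nhdsWithin_le_nhds (s := Set.Ioi 1))).and self_mem_nhdsWithin).exists
  exact ⟨ρ, hρ1, fun i => (hρ i).le⟩

namespace Matrix

variable {ι : Type*} [Fintype ι] {M : Matrix ι ι ℝ}

theorem mulVec_mono_of_nonneg (hM : ∀ i j, 0 ≤ M i j) {x y : ι → ℝ} (h : x ≤ y) :
    M *ᵥ x ≤ M *ᵥ y :=
  fun i => dotProduct_le_dotProduct_of_nonneg_left h (hM i)

theorem norm_smul_le_mulVec_norm (hM : ∀ i j, 0 ≤ M i j) {v : ι → ℂ} {μ : ℂ}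
    (hv : M.map ((↑) : ℝ → ℂ) *ᵥ v = μ • v) :
    ‖μ‖ • (fun i => ‖v i‖) ≤ M *ᵥ fun i => ‖v i‖ := fun i =>
  calc ‖μ‖ * ‖v i‖ = ‖(M.map ((↑) : ℝ → ℂ) *ᵥ v) i‖ := by simp [hv]
    _ ≤ ∑ j, ‖(M i j : ℂ) * v j‖ := norm_sum_le _ _
    _ = (M *ᵥ fun i => ‖v i‖) i := by
      simp [mulVec, dotProduct, abs_of_nonneg (hM i _)]

variable [DecidableEq ι]

theorem exists_mulVec_eq_smul_of_mem_spectrum {K : Type*} [Field K] {A : Matrix ι ι K} {μ : K}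
    (h : μ ∈ spectrum K A) : ∃ v ≠ 0, A *ᵥ v = μ • v := by
  rw [← spectrum_toLin', ← Module.End.hasEigenvalue_iff_mem_spectrum] at h
  obtain ⟨v, hv⟩ := h.exists_hasEigenvector
  exact ⟨v, hv.2, by simpa using hv.apply_eq_smul⟩

theorem exists_lt_mulVec_of_le_mulVec (hM : M.IsIrreducible) {x : ι → ℝ} (hx : 0 ≤ x)
    (hle : x ≤ M *ᵥ x) {i₀ : ι} (hlt : x i₀ < (M *ᵥ x) i₀) :
    ∃ y, 0 ≤ y ∧ ∀ i, y i < (M *ᵥ y) i := by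
  choose k _ hk using fun i => (isIrreducible_iff_exists_pow_pos hM.nonneg).mp hM i i₀
  set P := ∑ j, M ^ k j
  have hP : ∀ i j, 0 ≤ P i j := fun i j => by
    simpa only [P, sum_apply] using Finset.sum_nonneg fun l _ => pow_apply_nonneg hM.nonneg _ i j
  have hPcol : ∀ i, 0 < P i i₀ := fun i => by
    simpa only [P, sum_apply] using (hk i).trans_le <|
      Finset.single_le_sum (fun l _ => pow_apply_nonneg hM.nonneg (k l) i i₀) (Finset.mem_univ i)
  -- `P` commutes with `M` and has a positive column `i₀`, so it maps the gap `M x - x`, which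
  -- is positive at `i₀`, to a positive vector.
  have hcomm : M * P = P * M := (Commute.sum_right _ _ _ fun j _ => Commute.self_pow M (k j)).eq
  refine ⟨P *ᵥ x, by simpa using mulVec_mono_of_nonneg hP hx, fun i => ?_⟩
  have hgap : M *ᵥ (P *ᵥ x) - P *ᵥ x = P *ᵥ (M *ᵥ x - x) := by
    rw [mulVec_mulVec, hcomm, ← mulVec_mulVec, mulVec_sub]
  rw [← sub_pos, ← Pi.sub_apply, hgap]
  calc 0 < P i i₀ * (M *ᵥ x - x) i₀ := mul_pos (hPcol i) (sub_pos.mpr hlt)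
    _ ≤ (P *ᵥ (M *ᵥ x - x)) i := Finset.single_le_sum
        (fun j _ => mul_nonneg (hP i j) (sub_nonneg.mpr hle j)) (Finset.mem_univ i₀)

theorem ofReal_le_spectralRadius_of_smul_le_mulVec (hM : ∀ i j, 0 ≤ M i j) {x : ι → ℝ}
    (hx : 0 ≤ x) (hx0 : x ≠ 0) {ρ : ℝ} (hρ : 0 ≤ ρ) (h : ρ • x ≤ M *ᵥ x) :
    ENNReal.ofReal ρ ≤ spectralRadius ℂ (M.map ((↑) : ℝ → ℂ)) := by
  let _ : NormedRing (Matrix ι ι ℂ) := Matrix.linftyOpNormedRing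
  let _ : NormedAlgebra ℂ (Matrix ι ι ℂ) := Matrix.linftyOpNormedAlgebra
  obtain ⟨i₀, hi₀⟩ := Function.ne_iff.mp hx0
  have hpow : ∀ k : ℕ, ρ ^ k • x ≤ M ^ k *ᵥ x := by
    intro k
    induction k with
    | zero => simp
    | succ k ih =>
      calc ρ ^ (k + 1) • x = ρ ^ k • ρ • x := by rw [pow_succ, mul_smul]
        _ ≤ ρ ^ k • (M *ᵥ x) := smul_le_smul_of_nonneg_left h (by positivity)
        _ = M *ᵥ (ρ ^ k • x) := (mulVec_smul _ _ _).symm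
        _ ≤ M *ᵥ (M ^ k *ᵥ x) := mulVec_mono_of_nonneg hM ih
        _ = M ^ (k + 1) *ᵥ x := by rw [mulVec_mulVec, pow_succ']
  set x' : ι → ℂ := fun i => x i
  have hx' : 0 < ‖x'‖ := norm_pos_iff.mpr (Function.ne_iff.mpr ⟨i₀, by simpa [x'] using hi₀⟩)
  refine ofReal_le_spectralRadius_of_mul_pow_le_norm_pow (c := x i₀ / ‖x'‖)
    (div_pos ((hx i₀).lt_of_ne' hi₀) hx') hρ fun k => ?_
  rw [div_mul_eq_mul_div, div_le_iff₀ hx']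
  calc x i₀ * ρ ^ k ≤ (M ^ k *ᵥ x) i₀ := by simpa [mul_comm] using hpow k i₀
    _ ≤ ‖((M ^ k *ᵥ x) i₀ : ℂ)‖ := by simpa using le_abs_self _
    _ = ‖(M.map ((↑) : ℝ → ℂ) ^ k *ᵥ x') i₀‖ := by
      have hmap : M.map ((↑) : ℝ → ℂ) ^ k = (M ^ k).map (↑) :=
        (map_pow Complex.ofRealHom.mapMatrix M k).symm
      rw [hmap]
      exact congrArg norm (RingHom.map_mulVec Complex.ofRealHom (M ^ k) x i₀)
    _ ≤ ‖M.map ((↑) : ℝ → ℂ) ^ k *ᵥ x'‖ := norm_le_pi_norm _ i₀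
    _ ≤ ‖M.map ((↑) : ℝ → ℂ) ^ k‖ * ‖x'‖ := linfty_opNorm_mulVec _ _

end Matrix

section SpecRad

variable {n : ℕ} {M : Matrix (Fin n) (Fin n) ℝ}

theorem specRad_nonneg (M : Matrix (Fin n) (Fin n) ℝ) : 0 ≤ specRad M :=
  Real.sSup_nonneg <| by rintro _ ⟨z, -, rfl⟩; exact norm_nonneg z

theorem spectralRadius_le_ofReal_specRad (M : Matrix (Fin n) (Fin n) ℝ) :
    spectralRadius ℂ (M.map ((↑) : ℝ → ℂ)) ≤ ENNReal.ofReal (specRad M) :=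
  iSup₂_le fun μ hμ => by
    rw [← enorm_eq_nnnorm, ← ofReal_norm]
    exact ENNReal.ofReal_le_ofReal <|
      le_csSup ((finite_spectrum _).image _).bddAbove ⟨μ, hμ, rfl⟩

theorem exists_mem_spectrum_lt_norm_of_lt_specRad {r : ℝ} (hr : 0 ≤ r) (h : r < specRad M) :
    ∃ μ ∈ spectrum ℂ (M.map ((↑) : ℝ → ℂ)), r < ‖μ‖ := by
  have hne : (spectrum ℂ (M.map ((↑) : ℝ → ℂ))).Nonempty :=
    Set.nonempty_iff_ne_empty.mpr fun he => by simp [specRad, he] at h; linarith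
  obtain ⟨_, ⟨μ, hμ, rfl⟩, hlt⟩ := exists_lt_of_lt_csSup (hne.image _) h
  exact ⟨μ, hμ, hlt⟩

theorem le_specRad_of_smul_le_mulVec (hM : ∀ i j, 0 ≤ M i j) {x : Fin n → ℝ} (hx : 0 ≤ x)
    (hx0 : x ≠ 0) {ρ : ℝ} (hρ : 0 ≤ ρ) (h : ρ • x ≤ M *ᵥ x) : ρ ≤ specRad M :=
  (ENNReal.ofReal_le_ofReal_iff (specRad_nonneg M)).mp <|
    (ofReal_le_spectralRadius_of_smul_le_mulVec hM hx hx0 hρ h).trans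
      (spectralRadius_le_ofReal_specRad M)

theorem one_lt_specRad_of_le_mulVec (hM : M.IsIrreducible) {x : Fin n → ℝ} (hx : 0 ≤ x)
    (hle : x ≤ M *ᵥ x) {i₀ : Fin n} (hlt : x i₀ < (M *ᵥ x) i₀) : 1 < specRad M := by
  obtain ⟨y, hy, hylt⟩ := exists_lt_mulVec_of_le_mulVec hM hx hle hlt
  obtain ⟨ρ, hρ1, hρ⟩ := exists_one_lt_smul_le_of_forall_lt hylt
  have hy0 : y ≠ 0 := by rintro rfl; simpa using hylt i₀
  exact hρ1.trans_le (le_specRad_of_smul_le_mulVec hM.nonneg hy hy0 (by linarith) hρ)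

theorem exists_lt_mulVec_of_one_lt_specRad (hM : M.IsIrreducible) (h : 1 < specRad M) :
    ∃ y, 0 ≤ y ∧ ∀ i, y i < (M *ᵥ y) i := by
  obtain ⟨μ, hμ, hμ1⟩ := exists_mem_spectrum_lt_norm_of_lt_specRad zero_le_one h
  obtain ⟨v, hv0, hv⟩ := exists_mulVec_eq_smul_of_mem_spectrum hμ
  obtain ⟨i₀, hi₀⟩ := Function.ne_iff.mp hv0
  have hsub := norm_smul_le_mulVec_norm hM.nonneg hv
  have hle : ∀ i, ‖v i‖ ≤ ‖μ‖ * ‖v i‖ := fun i => le_mul_of_one_le_left (norm_nonneg _) hμ1.le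
  refine exists_lt_mulVec_of_le_mulVec hM (x := fun i => ‖v i‖) (i₀ := i₀)
    (fun i => norm_nonneg _) (fun i => (hle i).trans (hsub i)) ?_
  exact (lt_mul_of_one_lt_left (norm_pos_iff.mpr hi₀) hμ1).trans_le (hsub i₀)

end SpecRad

theorem HasDerivAt.eventually_lt_of_pos {g : ℝ → ℝ} {g' t₀ : ℝ} (hg : HasDerivAt g g' t₀)
    (hpos : 0 < g') : ∀ᶠ t in 𝓝[>] t₀, g t₀ < g t := by
  have hslope := ((hasDerivAt_iff_tendsto_slope.mp hg).mono_left
    (nhdsGT_le_nhdsNE t₀)).eventually (eventually_gt_nhds hpos)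
  filter_upwards [hslope, self_mem_nhdsWithin] with t hs ht
  rw [slope_def_field] at hs
  exact sub_pos.mp ((div_pos_iff_of_pos_right (sub_pos.mpr ht)).mp hs)

theorem ConcaveOn.sub_le_fderiv_sub {E : Type*} [NormedAddCommGroup E] [NormedSpace ℝ E]
    {s : Set E} {f : E → ℝ} (hf : ConcaveOn ℝ s f) {x y : E} (hx : x ∈ s) (hy : y ∈ s)
    (hd : DifferentiableAt ℝ f x) : f y - f x ≤ fderiv ℝ f x (y - x) := by
  have hline : HasDerivAt (f ∘ (AffineMap.lineMap x y : ℝ →ᵃ[ℝ] E)) (fderiv ℝ f x (y - x)) 0 :=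
    hd.hasFDerivAt.comp_hasDerivAt_of_eq (0 : ℝ) AffineMap.hasDerivAt_lineMap (by simp)
  simpa [slope] using (hf.comp_affineMap (AffineMap.lineMap x y)).slope_le_of_hasDerivAt
    (x := 0) (y := 1) (by simpa) (by simpa) zero_lt_one hline

section Utility

variable {n : ℕ} (u : Fin n → (Fin n → ℝ) → ℝ)

theorem fderiv_apply_eq_Jmat_mulVec (a v : Fin n → ℝ) (i : Fin n) :
    fderiv ℝ (u i) a v = (Jmat u a *ᵥ v) i := by
  rw [← ContinuousLinearMap.coe_coe, LinearMap.pi_apply_eq_sum_univ]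
  simp only [Jmat, mulVec, dotProduct, of_apply, smul_eq_mul, mul_comm]
  refine Finset.sum_congr rfl fun j _ => ?_
  rw [ContinuousLinearMap.coe_coe]
  congr 2
  ext l
  simp [Pi.single_apply, eq_comm]

theorem Jmat_mulVec_eq (a x : Fin n → ℝ) (i : Fin n) (hi : Jmat u a i i ≠ 0) :
    (Jmat u a *ᵥ x) i = -Jmat u a i i * ((Bmat u a *ᵥ x) i - x i) := by
  have hterm : ∀ j, -Jmat u a i i * (Bmat u a i j * x j) =
      Jmat u a i j * x j - if i = j then Jmat u a i j * x j else 0 := by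
    intro j
    by_cases h : i = j
    · simp [Bmat, h]
    · simp only [Bmat, of_apply, if_neg h, sub_zero]
      field_simp
  simp only [mulVec, dotProduct, mul_sub, Finset.mul_sum, hterm, Finset.sum_sub_distrib,
    Finset.sum_ite_eq, Finset.mem_univ, if_true]
  ring

theorem Bmat_apply_nonneg {a : Fin n → ℝ} (hCA : ∀ i, Jmat u a i i < 0)
    (hPE : ∀ i j, i ≠ j → 0 ≤ Jmat u a i j) (i j : Fin n) : 0 ≤ Bmat u a i j := by
  by_cases h : i = j
  · simp [Bmat, h]
  · simpa [Bmat, h] using div_nonneg (hPE i j h) (neg_nonneg.mpr (hCA i).le)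

theorem paretoImprovable_of_fderiv_pos [Nonempty (Fin n)] {a v : Fin n → ℝ} (ha : 0 ≤ a)
    (hv : 0 ≤ v) (hd : ∀ i, DifferentiableAt ℝ (u i) a) (hpos : ∀ i, 0 < fderiv ℝ (u i) a v) :
    ParetoImprovable u a := by
  have hline : ∀ i, HasDerivAt (fun t : ℝ => u i (a + t • v)) (fderiv ℝ (u i) a v) 0 := fun i =>
    (hd i).hasFDerivAt.comp_hasDerivAt_of_eq 0
      (by simpa using ((hasDerivAt_id (0 : ℝ)).smul_const v).const_add a) (by simp)
  obtain ⟨t, ht, ht0⟩ := ((eventually_all.mpr fun i =>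
    (hline i).eventually_lt_of_pos (hpos i)).and self_mem_nhdsWithin).exists
  refine ⟨a + t • v, fun i => add_nonneg (ha i) (mul_nonneg ht0.le (hv i)),
    fun i => by simpa using (ht i).le, Classical.arbitrary _, by simpa using ht _⟩

end Utility

/-- The zero action profile is Pareto efficient iff the spectral radius of the
benefits matrix at `0` is at most `1`. -/
theorem stmt2 {n : ℕ} (hn : 1 ≤ n)
    (u : Fin n → (Fin n → ℝ) → ℝ)
    (hconc : ∀ i, ConcaveOn ℝ (nonnegOrthant n) (u i))
    (hdiff : ∀ i, ContDiff ℝ 1 (u i))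
    (hCA : ∀ a ∈ nonnegOrthant n, ∀ i, Jmat u a i i < 0)
    (hPE : ∀ a ∈ nonnegOrthant n, ∀ i j, i ≠ j → 0 ≤ Jmat u a i j)
    (hirr : ∀ a ∈ nonnegOrthant n, MatIrreducible (Bmat u a)) :
    ¬ ParetoImprovable u (0 : Fin n → ℝ) ↔ specRad (Bmat u (0 : Fin n → ℝ)) ≤ 1 := by
  have h0 : (0 : Fin n → ℝ) ∈ nonnegOrthant n := fun _ => le_rfl
  have hJ : ∀ i, Jmat u 0 i i < 0 := hCA 0 h0
  have hB : (Bmat u 0).IsIrreducible :=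
    (isIrreducible_iff_exists_pow_pos (Bmat_apply_nonneg u hJ (hPE 0 h0))).mpr (hirr 0 h0)
  have hd : ∀ i, DifferentiableAt ℝ (u i) 0 := fun i => (hdiff i).differentiable one_ne_zero 0
  have hJB (x : Fin n → ℝ) (i : Fin n) := Jmat_mulVec_eq u 0 x i (hJ i).ne
  have hJpos (i : Fin n) : 0 < -Jmat u 0 i i := neg_pos.mpr (hJ i)
  rw [← not_lt, not_iff_not]
  constructor
  · rintro ⟨a, ha, hle, i₁, hlt⟩
    have hgrad (i : Fin n) : u i a - u i 0 ≤ -Jmat u 0 i i * ((Bmat u 0 *ᵥ a) i - a i) := by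
      simpa [fderiv_apply_eq_Jmat_mulVec, hJB] using (hconc i).sub_le_fderiv_sub h0 ha (hd i)
    refine one_lt_specRad_of_le_mulVec hB ha (i₀ := i₁) (fun i => ?_) ?_
    · exact sub_nonneg.mp <| (mul_nonneg_iff_of_pos_left (hJpos i)).mp <|
        (sub_nonneg.mpr (hle i)).trans (hgrad i)
    · exact sub_pos.mp <| (mul_pos_iff_of_pos_left (hJpos i₁)).mp <|
        (sub_pos.mpr hlt).trans_le (hgrad i₁)
  · intro h1
    have : Nonempty (Fin n) := ⟨⟨0, hn⟩⟩
    obtain ⟨y, hy, hylt⟩ := exists_lt_mulVec_of_one_lt_specRad hB h1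
    refine paretoImprovable_of_fderiv_pos u le_rfl hy hd fun i => ?_
    rw [fderiv_apply_eq_Jmat_mulVec, hJB]
    exact mul_pos (hJpos i) (sub_pos.mpr (hylt i))
end

section
/- Let a* be a Pareto efficient action profile with all entries strictly positive, and let θ be strictly positive Pareto weights satisfying θ B(a*) = θ. Let M ⊆ {1,…,n} with complement M^c. Then the cost of separation satisfies c_M(a*) ≤ Σ (θ_i/θ_j) B_ij(a*) a*_j, where the sum runs over all ordered pairs (i,j) with exactly one of i, j in M; that is, for every ε > 0 there exists a transfer profile (m_i)_{i∈N} deterring deviations from a* with Σ_i m_i(a*) ≤ Σ (θ_i/θ_j) B_ij(a*) a*_j + ε. -/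
open Matrix

/-- The transfer profile `m` deters deviations from `astar` by the coalition
`M`: the restriction of `astar` to `M` is Pareto efficient for `M` under the
transfer-augmented utilities `ũ_i = u_i + m_i`, holding the actions of
agents outside `M` fixed at `astar`. -/
def Deters {n : ℕ} (u m : Fin n → (Fin n → ℝ) → ℝ) (astar : Fin n → ℝ)
    (M : Finset (Fin n)) : Prop :=
  ¬ ∃ a : Fin n → ℝ, (∀ j, 0 ≤ a j) ∧ (∀ j ∉ M, a j = astar j) ∧
      (∀ i ∈ M, u i astar + m i astar ≤ u i a + m i a) ∧
      ∃ i ∈ M, u i astar + m i astar < u i a + m i a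

/-!
Subsidize each agent `i` by `c_i a_i`, linear in its own action, where `c_i` is the
`θ`-weighted benefit that `i` confers on the other side of the partition. Since `J = B - 1`,
the condition `θ B = θ` says `θ J = 0`; hence for a coalition `S` the `θ`-weighted sum of the
subsidized utilities of `S` is concave with vanishing derivative at `a*` in every direction that
moves only the actions of `S`. So `a*` maximizes it over the deviations of `S`, none of which can
then be a Pareto improvement for `S`. At `a*` these subsidies cost exactly the stated sum.
-/

open Finset

theorem ConcaveOn.sum {ι E : Type*} [AddCommMonoid E] [Module ℝ E] {s : Set E}
    {t : Finset ι} {f : ι → E → ℝ} (hs : Convex ℝ s) (hf : ∀ i ∈ t, ConcaveOn ℝ s (f i)) :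
    ConcaveOn ℝ s (fun x => ∑ i ∈ t, f i x) := by
  classical
  induction t using Finset.induction_on with
  | empty => simpa using concaveOn_const 0 hs
  | insert j t hj ih =>
    simp only [sum_insert hj]
    exact (hf j (mem_insert_self j t)).add (ih fun i hi => hf i (mem_insert_of_mem hi))

open AffineMap in
theorem ConcaveOn.le_of_hasFDerivAt_apply_nonpos {E : Type*} [NormedAddCommGroup E]
    [NormedSpace ℝ E] {s : Set E} {F : E → ℝ} {D : E →L[ℝ] ℝ} (hF : ConcaveOn ℝ s F)
    {x y : E} (hx : x ∈ s) (hy : y ∈ s) (hD : HasFDerivAt F D x) (hxy : D (y - x) ≤ 0) :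
    F y ≤ F x := by
  have hseg : ConcaveOn ℝ (Set.Icc 0 1) (F ∘ (lineMap x y : ℝ →ᵃ[ℝ] E)) :=
    (hF.comp_affineMap (lineMap x y)).subset (fun t ht => hF.1.lineMap_mem hx hy ht)
      (convex_Icc 0 1)
  have hderiv : HasDerivAt (F ∘ (lineMap x y : ℝ →ᵃ[ℝ] E)) (D (y - x)) 0 := by
    have hD0 : HasFDerivAt F D ((lineMap x y : ℝ →ᵃ[ℝ] E) 0) := by simpa using hD
    exact hD0.comp_hasDerivAt 0 hasDerivAt_lineMap
  have hslope := hseg.slope_le_of_hasDerivAt (Set.left_mem_Icc.2 zero_le_one)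
    (Set.right_mem_Icc.2 zero_le_one) zero_lt_one hderiv
  simp only [slope_def_field, Function.comp_apply, lineMap_apply_zero, lineMap_apply_one,
    sub_zero, div_one] at hslope
  linarith

theorem nonnegOrthant_eq_Ici (n : ℕ) : nonnegOrthant n = Set.Ici 0 := by
  ext x
  simp [nonnegOrthant, Pi.le_def]

theorem convex_nonnegOrthant (n : ℕ) : Convex ℝ (nonnegOrthant n) := by
  rw [nonnegOrthant_eq_Ici]
  exact convex_Ici 0

theorem fderiv_apply_eq_sum_Jmat {n : ℕ} (u : Fin n → (Fin n → ℝ) → ℝ) (a v : Fin n → ℝ)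
    (i : Fin n) : fderiv ℝ (u i) a v = ∑ k, Jmat u a i k * v k := by
  conv_lhs => rw [← univ_sum_single v]
  simp only [map_sum]
  refine sum_congr rfl fun k _ => ?_
  have hsingle : Pi.single k (v k) = v k • (Pi.single k 1 : Fin n → ℝ) := by
    rw [← Pi.single_smul', smul_eq_mul, mul_one]
  rw [hsingle, map_smul, smul_eq_mul, mul_comm]
  rfl

section Jacobian

variable {n : ℕ} {u : Fin n → (Fin n → ℝ) → ℝ} {a : Fin n → ℝ}

theorem Bmat_apply_of_ne (hnorm : ∀ i, Jmat u a i i = -1) {i j : Fin n} (hij : i ≠ j) :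
    Bmat u a i j = Jmat u a i j := by
  simp [Bmat, hij, hnorm i]

theorem Bmat_nonneg (hnorm : ∀ i, Jmat u a i i = -1)
    (hPE : ∀ i j, i ≠ j → 0 ≤ Jmat u a i j) (i j : Fin n) : 0 ≤ Bmat u a i j := by
  rcases eq_or_ne i j with rfl | hij
  · simp [Bmat]
  · exact Bmat_apply_of_ne hnorm hij ▸ hPE i j hij

theorem Jmat_eq_Bmat_sub_one (hnorm : ∀ i, Jmat u a i i = -1) : Jmat u a = Bmat u a - 1 := by
  ext i j
  rcases eq_or_ne i j with rfl | hij
  · simp [Bmat, hnorm i]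
  · simp [Bmat_apply_of_ne hnorm hij, hij]

theorem vecMul_Jmat_eq_zero (hnorm : ∀ i, Jmat u a i i = -1) {θ : Fin n → ℝ}
    (hθB : θ ᵥ* Bmat u a = θ) : θ ᵥ* Jmat u a = 0 := by
  rw [Jmat_eq_Bmat_sub_one hnorm, vecMul_sub, hθB, vecMul_one, sub_self]

end Jacobian

section Deterrence

variable {n : ℕ} {u : Fin n → (Fin n → ℝ) → ℝ} {a θ : Fin n → ℝ} {S : Finset (Fin n)}

theorem deters_of_weighted_fderiv_eq_zero {m : Fin n → (Fin n → ℝ) → ℝ}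
    {D : Fin n → (Fin n → ℝ) →L[ℝ] ℝ}
    (hconc : ∀ i ∈ S, ConcaveOn ℝ (nonnegOrthant n) (u i + m i))
    (hD : ∀ i ∈ S, HasFDerivAt (u i + m i) (D i) a) (ha : a ∈ nonnegOrthant n)
    (hθ : ∀ i ∈ S, 0 < θ i)
    (hcrit : ∀ v : Fin n → ℝ, (∀ k ∉ S, v k = 0) → ∑ i ∈ S, θ i * D i v = 0) :
    Deters u m a S := by
  rintro ⟨b, hb, hfix, hle, i₀, hi₀, hlt⟩
  set F : (Fin n → ℝ) → ℝ := fun x => ∑ i ∈ S, θ i • (u i + m i) x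
  have hFconc : ConcaveOn ℝ (nonnegOrthant n) F :=
    ConcaveOn.sum (convex_nonnegOrthant n) fun i hi => (hconc i hi).smul (hθ i hi).le
  have hFD : HasFDerivAt F (∑ i ∈ S, θ i • D i) a :=
    HasFDerivAt.fun_sum fun i hi => (hD i hi).const_smul (θ i)
  have hba : F b ≤ F a := by
    refine hFconc.le_of_hasFDerivAt_apply_nonpos ha hb hFD (le_of_eq ?_)
    simpa using hcrit (b - a) fun k hk => by simp [hfix k hk]
  have hab : F a < F b :=
    sum_lt_sum (fun i hi => mul_le_mul_of_nonneg_left (hle i hi) (hθ i hi).le)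
      ⟨i₀, hi₀, mul_lt_mul_of_pos_left hlt (hθ i₀ hi₀)⟩
  exact hba.not_gt hab

theorem deters_of_linear_transfers (hconc : ∀ i ∈ S, ConcaveOn ℝ (nonnegOrthant n) (u i))
    (hdiff : ∀ i ∈ S, DifferentiableAt ℝ (u i) a) (ha : a ∈ nonnegOrthant n)
    (hθ : ∀ i ∈ S, 0 < θ i) {c : Fin n → ℝ}
    (hc : ∀ k ∈ S, ∑ i ∈ S, θ i * Jmat u a i k + θ k * c k = 0) :
    Deters u (fun i x => c i * x i) a S := by
  refine deters_of_weighted_fderiv_eq_zero (D := fun i => fderiv ℝ (u i) a +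
      c i • ContinuousLinearMap.proj i) (fun i hi => ?_) (fun i hi => ?_) ha hθ fun v hv => ?_
  · exact (hconc i hi).add ((c i • LinearMap.proj i).concaveOn (convex_nonnegOrthant n))
  · exact (hdiff i hi).hasFDerivAt.add
      (c i • ContinuousLinearMap.proj i : (Fin n → ℝ) →L[ℝ] ℝ).hasFDerivAt
  have hJv : ∀ i, fderiv ℝ (u i) a v = ∑ k ∈ S, Jmat u a i k * v k := fun i => by
    rw [fderiv_apply_eq_sum_Jmat]
    exact (sum_subset (subset_univ S) fun k _ hk => by simp [hv k hk]).symm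
  calc ∑ i ∈ S, θ i * (fderiv ℝ (u i) a v + c i * v i)
      = ∑ k ∈ S, (∑ i ∈ S, θ i * Jmat u a i k + θ k * c k) * v k := by
        simp only [hJv, mul_add, sum_add_distrib, mul_sum, add_mul, sum_mul]
        rw [sum_comm]
        congr 1 <;> refine sum_congr rfl fun _ _ => ?_
        · exact sum_congr rfl fun _ _ => by ring
        · ring
    _ = 0 := sum_eq_zero fun k hk => by rw [hc k hk, zero_mul]

end Deterrence

section SeparationRate

variable {n : ℕ}

noncomputable def separationRate (B : Matrix (Fin n) (Fin n) ℝ) (θ : Fin n → ℝ)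
    (M : Finset (Fin n)) (i : Fin n) : ℝ :=
  ∑ j ∈ if i ∈ M then Mᶜ else M, θ j / θ i * B j i

variable {B : Matrix (Fin n) (Fin n) ℝ} {θ : Fin n → ℝ}

theorem separationRate_of_mem {S : Finset (Fin n)} {i : Fin n} (hi : i ∈ S) :
    separationRate B θ S i = ∑ j ∈ Sᶜ, θ j / θ i * B j i := by
  simp [separationRate, hi]

theorem separationRate_compl (M : Finset (Fin n)) :
    separationRate B θ Mᶜ = separationRate B θ M := by
  funext i
  by_cases hi : i ∈ M <;> simp [separationRate, hi]

theorem separationRate_nonneg (hθ : ∀ i, 0 ≤ θ i) (hB : ∀ i j, 0 ≤ B i j) (M : Finset (Fin n))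
    (i : Fin n) : 0 ≤ separationRate B θ M i :=
  sum_nonneg fun j _ => mul_nonneg (div_nonneg (hθ j) (hθ i)) (hB j i)

theorem sum_separationRate_mul (M : Finset (Fin n)) (x : Fin n → ℝ) :
    ∑ i, separationRate B θ M i * x i =
      ∑ i, ∑ j, if (i ∈ M ∧ j ∉ M) ∨ (i ∉ M ∧ j ∈ M) then θ i / θ j * B i j * x j else 0 := by
  rw [sum_comm]
  refine sum_congr rfl fun i _ => ?_
  rw [separationRate, sum_mul, ← sum_filter]
  refine sum_congr ?_ fun j _ => rfl
  ext j
  by_cases hi : i ∈ M <;> by_cases hj : j ∈ M <;> simp [hi, hj]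

theorem add_mul_separationRate_eq_zero {u : Fin n → (Fin n → ℝ) → ℝ} {a : Fin n → ℝ}
    (hnorm : ∀ i, Jmat u a i i = -1) (hθB : θ ᵥ* Bmat u a = θ) {S : Finset (Fin n)}
    {k : Fin n} (hk : k ∈ S) (hθk : θ k ≠ 0) :
    ∑ i ∈ S, θ i * Jmat u a i k + θ k * separationRate (Bmat u a) θ S k = 0 := by
  have hrate : θ k * separationRate (Bmat u a) θ S k = ∑ j ∈ Sᶜ, θ j * Jmat u a j k := by
    rw [separationRate_of_mem hk, mul_sum]
    refine sum_congr rfl fun j hj => ?_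
    rw [Bmat_apply_of_ne hnorm (ne_of_mem_of_not_mem hk (mem_compl.1 hj)).symm]
    field_simp
  rw [hrate, sum_add_sum_compl]
  simpa [vecMul, dotProduct] using congrFun (vecMul_Jmat_eq_zero hnorm hθB) k

end SeparationRate

theorem stmt15_general {n : ℕ}
    (u : Fin n → (Fin n → ℝ) → ℝ)
    (hconc : ∀ i, ConcaveOn ℝ (nonnegOrthant n) (u i))
    (hdiff : ∀ i, ContDiff ℝ 1 (u i))
    (hnorm : ∀ a ∈ nonnegOrthant n, ∀ i, Jmat u a i i = -1)
    (hPE : ∀ a ∈ nonnegOrthant n, ∀ i j, i ≠ j → 0 ≤ Jmat u a i j)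
    (astar : Fin n → ℝ) (hastar : ∀ i, 0 < astar i)
    (θ : Fin n → ℝ) (hθ : ∀ i, 0 < θ i)
    (hθB : θ ᵥ* Bmat u astar = θ)
    (M : Finset (Fin n)) :
    ∀ ε : ℝ, 0 < ε →
      ∃ m : Fin n → (Fin n → ℝ) → ℝ,
        (∀ i, ∀ x : Fin n → ℝ, (∀ j, 0 ≤ x j) → 0 ≤ m i x) ∧
        Deters u m astar M ∧ Deters u m astar Mᶜ ∧
        ∑ i, m i astar ≤
          (∑ i, ∑ j, if (i ∈ M ∧ j ∉ M) ∨ (i ∉ M ∧ j ∈ M) then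
              (θ i / θ j) * Bmat u astar i j * astar j else 0) + ε := by
  intro ε hε
  have ha : astar ∈ nonnegOrthant n := fun i => (hastar i).le
  have hnorm_a := hnorm astar ha
  set c := separationRate (Bmat u astar) θ M
  have hdeters (S : Finset (Fin n)) (hS : separationRate (Bmat u astar) θ S = c) :
      Deters u (fun i x => c i * x i) astar S :=
    hS ▸ deters_of_linear_transfers (fun i _ => hconc i)
      (fun i _ => (hdiff i).differentiable one_ne_zero _) ha (fun i _ => hθ i)
      fun k hk => add_mul_separationRate_eq_zero hnorm_a hθB hk (hθ k).ne'
  refine ⟨fun i x => c i * x i, fun i x hx => ?_, hdeters M rfl,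
    hdeters Mᶜ (separationRate_compl M), ?_⟩
  · exact mul_nonneg (separationRate_nonneg (fun i => (hθ i).le)
      (Bmat_nonneg hnorm_a (hPE astar ha)) M i) (hx i)
  · rw [sum_separationRate_mul]
    linarith

/-- Bound on the cost of separation: for every `ε > 0` there is a
nonnegative transfer profile deterring deviations from `astar` by both `M`
and its complement whose total cost at `astar` is at most
`Σ (θ_i/θ_j) B_ij(astar) astar_j + ε`, the sum over ordered pairs `(i,j)`
with exactly one element in `M`. Utilities are normalized so that
`J_ii(a) = -1` everywhere. -/
theorem stmt15 {n : ℕ} (hn : 1 ≤ n)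
    (u : Fin n → (Fin n → ℝ) → ℝ)
    (hconc : ∀ i, ConcaveOn ℝ (nonnegOrthant n) (u i))
    (hdiff : ∀ i, ContDiff ℝ 1 (u i))
    (hnorm : ∀ a ∈ nonnegOrthant n, ∀ i, Jmat u a i i = -1)
    (hPE : ∀ a ∈ nonnegOrthant n, ∀ i j, i ≠ j → 0 ≤ Jmat u a i j)
    (hirr : ∀ a ∈ nonnegOrthant n, MatIrreducible (Bmat u a))
    (astar : Fin n → ℝ) (hastar : ∀ i, 0 < astar i)
    (hpareto : ¬ ParetoImprovable u astar)
    (θ : Fin n → ℝ) (hθ : ∀ i, 0 < θ i)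
    (hθB : θ ᵥ* Bmat u astar = θ)
    (M : Finset (Fin n)) :
    ∀ ε : ℝ, 0 < ε →
      ∃ m : Fin n → (Fin n → ℝ) → ℝ,
        (∀ i, ∀ x : Fin n → ℝ, (∀ j, 0 ≤ x j) → 0 ≤ m i x) ∧
        Deters u m astar M ∧ Deters u m astar Mᶜ ∧
        ∑ i, m i astar ≤
          (∑ i, ∑ j, if (i ∈ M ∧ j ∉ M) ∨ (i ∉ M ∧ j ∈ M) then
              (θ i / θ j) * Bmat u astar i j * astar j else 0) + ε :=
  stmt15_general u hconc hdiff hnorm hPE astar hastar θ hθ hθB M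
end
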